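/- Let n ≥ 3 and let SF_n be the sunflower graph obtained from the wheel graph W_{n+1} by replacing each rim edge by a triangle, so that two of these triangles share a vertex if and only if the corresponding rim edges are adjacent. Then the chromatic curling number of SF_n equals n + 1. -/

import Mathlib

open SimpleGraph Finset

/-- A proper vertex colouring of `G` with colour set `Fin k`. -/
def IsProperColoring {V : Type*} (G : SimpleGraph V) {k : ℕ} (C : V → Fin k) : Prop :=
  ∀ ⦃v w⦄, G.Adj v w → C v ≠ C w

/-- The chromatic number of `G`, as a natural number. -/
noncomputable def chi {V : Type*} (G : SimpleGraph V) : ℕ :=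
  G.chromaticNumber.toNat

/-- θ(cᵢ): the number of vertices receiving colour `i` under the colouring `C`. -/
def theta {V : Type*} [Fintype V] {k : ℕ} (C : V → Fin k) (i : Fin k) : ℕ :=
  (Finset.univ.filter fun v => C v = i).card

/-- The list of colour class sizes of `C`, sorted in descending order. -/
def classSizesDesc {V : Type*} [Fintype V] {k : ℕ} (C : V → Fin k) : List ℕ :=
  (List.insertionSort (· ≤ ·) (List.ofFn fun i => theta C i)).reverse

/-- A χ⁻-colouring of `G`: a proper colouring with exactly χ(G) colours such that,
greedily, the colour class of `c₁` is as large as possible, then the colour class of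
`c₂` is as large as possible among the remaining vertices, and so on; equivalently,
the descending sequence of colour class sizes is lexicographically maximal among
all proper colourings with χ(G) colours. -/
def IsChiMinusColoring {V : Type*} [Fintype V] (G : SimpleGraph V)
    (C : V → Fin (chi G)) : Prop :=
  IsProperColoring G C ∧
    ∀ C' : V → Fin (chi G), IsProperColoring G C' →
      ¬ List.Lex (· < ·) (classSizesDesc C) (classSizesDesc C')

/-- The sunflower graph `SFₙ`: the wheel graph `W_{n+1}` (rim vertices
`some (v, false)`, central vertex `none`) together with, for each rim edge
`{vᵢ, vᵢ₊₁}`, a new outer vertex `some (v, true)` adjacent to both of its endpoints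
(replacing each rim edge by a triangle). -/
def sunflowerG (n : ℕ) : SimpleGraph (Option (Fin n × Bool)) :=
  SimpleGraph.fromRel (fun a b =>
    match a, b with
    | some (v, false), some (w, false) => w.val = (v.val + 1) % n
    | some (v, true), some (w, false) => w = v ∨ w.val = (v.val + 1) % n
    | none, some (_, false) => True
    | _, _ => False)

def srel (n : ℕ) (a b : Option (Fin n × Bool)) : Prop :=
  match a, b with
  | some (v, false), some (w, false) => w.val = (v.val + 1) % n
  | some (v, true), some (w, false) => w = v ∨ w.val = (v.val + 1) % n
  | none, some (_, false) => True
  | _, _ => False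

lemma sunflower_adj {n : ℕ} {a b : Option (Fin n × Bool)} :
    (sunflowerG n).Adj a b ↔ a ≠ b ∧ (srel n a b ∨ srel n b a) := Iff.rfl

example (n : ℕ) (i : Fin n) : (sunflowerG n).Adj (some (i,true)) (some (i,false)) :=
  sunflower_adj.mpr ⟨by simp, Or.inl (Or.inl rfl)⟩

example (n : ℕ) (i : Fin n) : (sunflowerG n).Adj none (some (i,false)) :=
  sunflower_adj.mpr ⟨by simp, Or.inl trivial⟩

def rim4 (n : ℕ) (i : Fin n) : Fin 4 :=
  if i.val = n - 1 then 3 else if i.val % 2 = 0 then 1 else 2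

def rim3 (n : ℕ) (i : Fin n) : Fin 3 :=
  if i.val % 2 = 0 then 1 else 2

lemma mod_cases {n : ℕ} (hn : 3 ≤ n) (i j : Fin n) (h : j.val = (i.val + 1) % n) :
    (i.val + 1 < n ∧ j.val = i.val + 1) ∨ (i.val = n - 1 ∧ j.val = 0) := by
  rcases Nat.lt_or_ge (i.val + 1) n with hc | hc
  · exact Or.inl ⟨hc, by rwa [Nat.mod_eq_of_lt hc] at h⟩
  · have h1 : i.val + 1 = n := by have := i.2; omega
    rw [h1, Nat.mod_self] at h
    exact Or.inr ⟨by omega, h⟩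

lemma rim4_ne {n : ℕ} (hn : 3 ≤ n) (i j : Fin n) (h : j.val = (i.val + 1) % n) :
    rim4 n i ≠ rim4 n j := by
  have hij := mod_cases hn i j h
  have hi := i.2; have hj := j.2
  unfold rim4
  split_ifs <;> first | decide | omega

lemma rim3_ne {n : ℕ} (hn : 3 ≤ n) (he : n % 2 = 0) (i j : Fin n) (h : j.val = (i.val + 1) % n) :
    rim3 n i ≠ rim3 n j := by
  have hij := mod_cases hn i j h
  have hi := i.2; have hj := j.2
  unfold rim3
  split_ifs <;> first | decide | omega

lemma rim4_ne_zero {n : ℕ} (i : Fin n) : rim4 n i ≠ 0 := by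
  unfold rim4; split_ifs <;> decide

lemma rim3_ne_zero {n : ℕ} (i : Fin n) : rim3 n i ≠ 0 := by
  unfold rim3; split_ifs <;> decide

def col4 (n : ℕ) : Option (Fin n × Bool) → Fin 4
  | none => 0
  | some (_, true) => 0
  | some (i, false) => rim4 n i

def col3 (n : ℕ) : Option (Fin n × Bool) → Fin 3
  | none => 0
  | some (_, true) => 0
  | some (i, false) => rim3 n i

lemma proper_of_key {n k : ℕ} {f : Option (Fin n × Bool) → Fin k}
    (key : ∀ a b, a ≠ b → srel n a b → f a ≠ f b) :
    IsProperColoring (sunflowerG n) f := by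
  intro a b hab
  rw [sunflower_adj] at hab
  obtain ⟨hne, h | h⟩ := hab
  · exact key a b hne h
  · exact fun e => key b a hne.symm h e.symm

lemma col4_proper {n : ℕ} (hn : 3 ≤ n) : IsProperColoring (sunflowerG n) (col4 n) := by
  apply proper_of_key
  rintro (_ | ⟨i, _ | _⟩) (_ | ⟨j, _ | _⟩) hne h <;>
    simp only [srel] at h <;> try exact h.elim
  · exact fun e => rim4_ne_zero j e.symm
  · exact rim4_ne hn i j h
  · exact fun e => rim4_ne_zero j e.symm

lemma col3_proper {n : ℕ} (hn : 3 ≤ n) (he : n % 2 = 0) :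
    IsProperColoring (sunflowerG n) (col3 n) := by
  apply proper_of_key
  rintro (_ | ⟨i, _ | _⟩) (_ | ⟨j, _ | _⟩) hne h <;>
    simp only [srel] at h <;> try exact h.elim
  · exact fun e => rim3_ne_zero j e.symm
  · exact rim3_ne hn he i j h
  · exact fun e => rim3_ne_zero j e.symm

lemma not_colorable_two {n : ℕ} (hn : 3 ≤ n) : ¬ (sunflowerG n).Colorable 2 := by
  rintro ⟨c⟩
  have h0 : (0 : ℕ) < n := by omega
  set v0 : Option (Fin n × Bool) := some (⟨0, by omega⟩, false)
  set v1 : Option (Fin n × Bool) := some (⟨1, by omega⟩, false)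
  have a01 : (sunflowerG n).Adj v0 v1 := by
    apply sunflower_adj.mpr
    refine ⟨by simp [v0, v1], Or.inl ?_⟩
    show (1 : ℕ) = (0 + 1) % n
    exact (Nat.mod_eq_of_lt (by omega)).symm
  have a0 : (sunflowerG n).Adj none v0 := sunflower_adj.mpr ⟨by simp [v0], Or.inl trivial⟩
  have a1 : (sunflowerG n).Adj none v1 := sunflower_adj.mpr ⟨by simp [v1], Or.inl trivial⟩
  have fact : ∀ a b c : Fin 2, a ≠ b → a ≠ c → b ≠ c → False := by decide
  exact fact _ _ _ (c.valid a0) (c.valid a1) (c.valid a01)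

lemma succ_mod_eq {n : ℕ} (hn : 2 ≤ n) (i : ℕ) : (i + 1) % n = (i % n + 1) % n := by
  conv_lhs => rw [Nat.add_mod, Nat.mod_eq_of_lt (show 1 < n by omega)]

lemma not_colorable_three {n : ℕ} (hn : 3 ≤ n) (ho : n % 2 = 1) :
    ¬ (sunflowerG n).Colorable 3 := by
  rintro ⟨c⟩
  have hn0 : 0 < n := by omega
  set v : ℕ → Option (Fin n × Bool) := fun i => some (⟨i % n, Nat.mod_lt i hn0⟩, false) with hv
  have hadjc : ∀ i, (sunflowerG n).Adj none (v i) :=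
    fun i => sunflower_adj.mpr ⟨by simp [v], Or.inl trivial⟩
  have hadj : ∀ i, (sunflowerG n).Adj (v i) (v (i + 1)) := by
    intro i
    apply sunflower_adj.mpr
    constructor
    · simp only [v, ne_eq, Option.some.injEq, Prod.mk.injEq, Fin.mk.injEq]
      intro ⟨h, _⟩
      rw [succ_mod_eq (by omega)] at h
      have hr : i % n < n := Nat.mod_lt i hn0
      rcases Nat.lt_or_ge (i % n + 1) n with hc | hc
      · rw [Nat.mod_eq_of_lt hc] at h; omega
      · have : i % n + 1 = n := by omega
        rw [this, Nat.mod_self] at h; omega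
    · exact Or.inl (succ_mod_eq (by omega) i)
  have fact : ∀ a p q r : Fin 3, p ≠ a → q ≠ a → r ≠ a → p ≠ q → r ≠ q → r = p := by
    intro a p q r
    fin_cases a <;> fin_cases p <;> fin_cases q <;> fin_cases r <;> decide
  have hvc : ∀ i, c (v i) ≠ c none := fun i => (c.valid (hadjc i)).symm
  have step : ∀ i, c (v (i + 2)) = c (v i) := by
    intro i
    exact fact (c none) (c (v i)) (c (v (i+1))) (c (v (i+2))) (hvc i) (hvc (i+1))
      (hvc (i+2)) (c.valid (hadj i)) (c.valid (hadj (i+1))).symm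
  have even : ∀ j, c (v (2 * j)) = c (v 0) := by
    intro j
    induction j with
    | zero => rfl
    | succ j ih =>
      have : 2 * (j + 1) = 2 * j + 2 := by ring
      rw [this, step, ih]
  obtain ⟨j, hj⟩ : ∃ j, n - 1 = 2 * j := ⟨(n-1)/2, by omega⟩
  have hvn : v n = v 0 := by simp [v, Nat.mod_self]
  have h1 : c (v (n - 1)) = c (v 0) := by rw [hj, even]
  have h2 : c (v (n - 1)) ≠ c (v 0) := by
    have := c.valid (hadj (n - 1))
    rwa [show n - 1 + 1 = n by omega, hvn] at this
  exact h2 h1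

lemma le_getLast_of_sorted : ∀ {s : List ℕ}, s.Pairwise (· ≤ ·) → ∀ {x}, x ∈ s →
    ∀ (h : s ≠ []), x ≤ s.getLast h
  | [], _, _, hx, _ => absurd hx List.not_mem_nil
  | [a], _, _, hx, _ => by simp_all
  | a :: b :: t, hs, x, hx, _ => by
    rw [List.getLast_cons (List.cons_ne_nil b t)]
    rcases List.mem_cons.mp hx with rfl | hx
    · exact le_trans (List.rel_of_pairwise_cons hs (List.getLast_mem _))
        (le_refl _)
    · exact le_getLast_of_sorted hs.of_cons hx (List.cons_ne_nil b t)

lemma head?_classSizesDesc {V : Type*} [Fintype V] {k : ℕ} (hk : 0 < k) (C : V → Fin k) :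
    (classSizesDesc C).head? = some (Finset.univ.sup (theta C)) := by
  classical
  set l : List ℕ := List.ofFn fun i => theta C i with hl
  set s := List.insertionSort (· ≤ ·) l with hs
  have hperm : List.Perm s l := List.perm_insertionSort _ l
  have hsne : s ≠ [] := by
    intro h
    have := hperm.length_eq
    rw [h] at this
    simp [hl] at this
    omega
  have hrne : s.reverse ≠ [] := by simpa using hsne
  rw [show classSizesDesc C = s.reverse from rfl, List.head?_eq_head hrne,
    List.head_reverse hrne]
  congr 1
  apply le_antisymm
  · have hmem : s.getLast hsne ∈ l := hperm.mem_iff.mp (List.getLast_mem hsne)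
    rw [hl, List.mem_ofFn] at hmem
    obtain ⟨i, hi⟩ := hmem
    rw [← hi]
    exact Finset.le_sup (Finset.mem_univ i)
  · apply Finset.sup_le
    intro i _
    have hmem : theta C i ∈ s := hperm.mem_iff.mpr (by rw [hl, List.mem_ofFn]; exact ⟨i, rfl⟩)
    exact le_getLast_of_sorted (List.pairwise_insertionSort _ l) hmem hsne

lemma theta_le {n k : ℕ} {C : Option (Fin n × Bool) → Fin k}
    (h : IsProperColoring (sunflowerG n) C) (i : Fin k) : theta C i ≤ n + 1 := by
  classical
  have hinj : Set.InjOn (fun x : Option (Fin n × Bool) => Option.map Prod.fst x)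
      ↑(Finset.univ.filter fun v => C v = i) := by
    intro x hx y hy e
    simp only [Finset.coe_filter, Set.mem_setOf_eq, Finset.mem_univ, true_and] at hx hy
    match x, y with
    | none, none => rfl
    | none, some (b, bb) => simp at e
    | some (a, ba), none => simp at e
    | some (a, ba), some (b, bb) =>
      simp only [Option.map_some, Option.some.injEq] at e
      subst e
      match ba, bb with
      | false, false => rfl
      | true, true => rfl
      | true, false =>
        exact absurd (hx.trans hy.symm)
          (h (sunflower_adj.mpr ⟨by simp, Or.inl (Or.inl rfl)⟩))
      | false, true =>
        exact absurd (hy.trans hx.symm)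
          (h (sunflower_adj.mpr ⟨by simp, Or.inl (Or.inl rfl)⟩))
  have hcard := Finset.card_le_card_of_injOn _
    (fun a _ => Finset.mem_univ (Option.map Prod.fst a)) hinj
  calc theta C i ≤ (Finset.univ : Finset (Option (Fin n))).card := hcard
    _ = n + 1 := by simp [Finset.card_univ]

lemma card_class {n k : ℕ} (C' : Option (Fin n × Bool) → Fin k) (c0 : Fin k)
    (h : ∀ x, C' x = c0 ↔ (x = none ∨ ∃ i : Fin n, x = some (i, true))) :
    theta C' c0 = n + 1 := by
  classical
  unfold theta
  have heq : (Finset.univ.filter fun x => C' x = c0) =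
      Finset.univ.image (fun o : Option (Fin n) => o.map (fun i => (i, true))) := by
    ext x
    simp only [Finset.mem_filter, Finset.mem_univ, true_and, Finset.mem_image, h]
    constructor
    · rintro (rfl | ⟨i, rfl⟩)
      · exact ⟨none, rfl⟩
      · exact ⟨some i, rfl⟩
    · rintro ⟨o, rfl⟩
      match o with
      | none => exact Or.inl rfl
      | some i => exact Or.inr ⟨i, rfl⟩
  rw [heq, Finset.card_image_of_injective _ ?hinj]
  · simp [Finset.card_univ]
  · intro a b e
    match a, b with
    | none, none => rfl
    | none, some _ => simp at e
    | some _, none => simp at e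
    | some a, some b => simpa using e

theorem sunflowerGraph_chromaticCurlingNumber (n : ℕ) (hn : 3 ≤ n)
    (C : Option (Fin n × Bool) → Fin (chi (sunflowerG n)))
    (hC : IsChiMinusColoring (sunflowerG n) C) :
    Finset.univ.sup (theta C) = n + 1 := by
  classical
  obtain ⟨hprop, hmax⟩ := hC
  have h4 : (sunflowerG n).Colorable 4 :=
    ⟨SimpleGraph.Coloring.mk (col4 n) (fun {v w} h => col4_proper hn h)⟩
  have hle : (sunflowerG n).chromaticNumber ≤ ((4 : ℕ) : ℕ∞) := h4.chromaticNumber_le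
  have hnetop : (sunflowerG n).chromaticNumber ≠ ⊤ :=
    ne_top_of_le_ne_top (ENat.coe_ne_top 4) hle
  have hcast : ((chi (sunflowerG n) : ℕ) : ℕ∞) = (sunflowerG n).chromaticNumber :=
    ENat.coe_toNat hnetop
  have hk3 : 3 ≤ chi (sunflowerG n) := by
    by_contra h
    have h2 : (sunflowerG n).chromaticNumber ≤ ((2 : ℕ) : ℕ∞) := by
      rw [← hcast]; exact_mod_cast (by omega : chi (sunflowerG n) ≤ 2)
    exact not_colorable_two hn (SimpleGraph.chromaticNumber_le_iff_colorable.mp h2)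
  have hex : ∃ C' : Option (Fin n × Bool) → Fin (chi (sunflowerG n)),
      IsProperColoring (sunflowerG n) C' ∧ theta C' ⟨0, by omega⟩ = n + 1 := by
    rcases Nat.mod_two_eq_zero_or_one n with he | ho
    · refine ⟨Fin.castLE hk3 ∘ col3 n, ?_, ?_⟩
      · intro v w hadj e
        exact col3_proper hn he hadj (Fin.castLE_injective hk3 e)
      · apply card_class
        intro x
        have hv : ∀ y : Fin 3, Fin.castLE hk3 y = ⟨0, by omega⟩ ↔ y = 0 := by
          intro y; rw [Fin.ext_iff, Fin.coe_castLE, Fin.ext_iff]; simp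
        match x with
        | none => simp [col3, hv]
        | some (i, true) => simpa [col3, hv] using ⟨i, rfl⟩
        | some (i, false) => simp [col3, hv, rim3_ne_zero]
    · have hk4 : 4 ≤ chi (sunflowerG n) := by
        by_contra h
        have h3 : (sunflowerG n).chromaticNumber ≤ ((3 : ℕ) : ℕ∞) := by
          rw [← hcast]; exact_mod_cast (by omega : chi (sunflowerG n) ≤ 3)
        exact not_colorable_three hn ho
          (SimpleGraph.chromaticNumber_le_iff_colorable.mp h3)
      refine ⟨Fin.castLE hk4 ∘ col4 n, ?_, ?_⟩
      · intro v w hadj e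
        exact col4_proper hn hadj (Fin.castLE_injective hk4 e)
      · apply card_class
        intro x
        have hv : ∀ y : Fin 4, Fin.castLE hk4 y = ⟨0, by omega⟩ ↔ y = 0 := by
          intro y; rw [Fin.ext_iff, Fin.coe_castLE, Fin.ext_iff]; simp
        match x with
        | none => simp [col4, hv]
        | some (i, true) => simpa [col4, hv] using ⟨i, rfl⟩
        | some (i, false) => simp [col4, hv, rim4_ne_zero]
  obtain ⟨C', hC'p, hC'c⟩ := hex
  have h1 := head?_classSizesDesc (show 0 < chi (sunflowerG n) by omega) C
  have h2 := head?_classSizesDesc (show 0 < chi (sunflowerG n) by omega) C'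
  have hge : Finset.univ.sup (theta C') ≤ Finset.univ.sup (theta C) := by
    by_contra hlt
    push_neg at hlt
    apply hmax C' hC'p
    rcases e1 : classSizesDesc C with _ | ⟨a, t⟩
    · rw [e1] at h1; simp at h1
    rcases e2 : classSizesDesc C' with _ | ⟨b, t'⟩
    · rw [e2] at h2; simp at h2
    rw [e1] at h1
    rw [e2] at h2
    simp only [List.head?_cons, Option.some.injEq] at h1 h2
    exact List.Lex.rel (by rw [h1, h2]; exact hlt)
  have hup : Finset.univ.sup (theta C) ≤ n + 1 := Finset.sup_le fun i _ => theta_le hprop i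
  have hlow : n + 1 ≤ Finset.univ.sup (theta C') := by
    rw [← hC'c]; exact Finset.le_sup (Finset.mem_univ _)
  omega
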